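/- Let θ be a bounded (norm-continuous) linear functional on the space l_∞ of bounded real sequences. Then θ ∘ S = θ if and only if θ ∘ T = θ, where S is the right shift and T is the left shift. -/
import Mathlib


open BoundedContinuousFunction

/-- The right shift `S` on `l_∞ = ℕ →ᵇ ℝ`: `(Sx)_0 = 0`, `(Sx)_{n+1} = x_n`. -/
noncomputable def shiftR (x : ℕ →ᵇ ℝ) : ℕ →ᵇ ℝ :=
  BoundedContinuousFunction.ofNormedAddCommGroup
    (fun n => match n with
      | 0 => 0
      | m + 1 => x m)
    (continuous_of_discreteTopology) ‖x‖
    (by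
      intro n
      match n with
      | 0 => simp
      | m + 1 => simpa using x.norm_coe_le_norm m)

/-- The left shift `T` on `l_∞ = ℕ →ᵇ ℝ`: `(Tx)_n = x_{n+1}`. -/
noncomputable def shiftL (x : ℕ →ᵇ ℝ) : ℕ →ᵇ ℝ :=
  BoundedContinuousFunction.ofNormedAddCommGroup
    (fun n => x (n + 1))
    (continuous_of_discreteTopology) ‖x‖
    (fun n => x.norm_coe_le_norm (n + 1))

/-- A bounded (norm-continuous) linear functional `θ` on `l_∞` satisfies `θ ∘ S = θ`
if and only if it satisfies `θ ∘ T = θ`. -/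
theorem stmt_0 (θ : (ℕ →ᵇ ℝ) →L[ℝ] ℝ) :
    (∀ x : ℕ →ᵇ ℝ, θ (shiftR x) = θ x) ↔ (∀ x : ℕ →ᵇ ℝ, θ (shiftL x) = θ x) := by
  constructor
  · intro h x
    have key : shiftR (shiftL x) = x - (x 0) • ((1 : ℕ →ᵇ ℝ) - shiftR 1) := by
      ext n
      cases n with
      | zero => simp [shiftR, shiftL]
      | succ m => simp [shiftR, shiftL]
    have h1 : θ ((1 : ℕ →ᵇ ℝ) - shiftR 1) = 0 := by
      rw [map_sub, h 1, sub_self]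
    calc θ (shiftL x) = θ (shiftR (shiftL x)) := (h _).symm
      _ = θ x - x 0 * θ ((1 : ℕ →ᵇ ℝ) - shiftR 1) := by
          rw [key, map_sub, map_smul]; rfl
      _ = θ x := by rw [h1, mul_zero, sub_zero]
  · intro h x
    have key : shiftL (shiftR x) = x := by
      ext n; simp [shiftR, shiftL]
    rw [← h (shiftR x), key]
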